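/- Let G = (V, E) be a graph with a linear order < on E. For every edge subset A ⊆ E there exists a spanning forest F = (V, A_f) of G, a subset A_i ⊆ E_i(F) of its internally active edges, and a subset A_e ⊆ E_e(F) of its externally active edges, such that A = (A_f \ A_i) ∪ A_e. Moreover A_i = A_f \ A and A_e = A \ A_f. -/

import Mathlib

/-!
Order the edges so that those of `A` come first, increasing, followed by the others, decreasing,
and let `F` be a spanning forest of minimum weight for a weight increasing along this order.
If `F - e + f` is again a spanning forest, minimality forces `f` to come after `e`. For
`e ∈ F \ A` with `e < f`, and for `f ∈ A \ F` with `f < e`, the edge `f` comes first, so no such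
exchange exists: `e` is internally and `f` externally active. A spanning forest exists because
a forest with the most edges spans every edge of the graph.
-/

open Finset

attribute [local instance] Classical.propDecidable

/-- A multigraph on vertex type `V` with edge index type `E` is given by a map
`ends : E → Sym2 V` (loops and parallel edges are allowed).  For an edge subset
`A ⊆ E`, `edgeGraph ends A` is the simple graph on `V` whose adjacency is
witnessed by some edge of `A`; it determines the connected components of the
spanning subgraph `(V, A)`. -/
def edgeGraph {V E : Type} (ends : E → Sym2 V) (A : Finset E) : SimpleGraph V where
  Adj a b := a ≠ b ∧ ∃ e ∈ A, ends e = s(a, b)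
  symm := by
    constructor; rintro a b ⟨hab, e, he, hs⟩
    exact ⟨Ne.symm hab, e, he, by rw [hs, Sym2.eq_swap]⟩
  loopless := by constructor; rintro a ⟨h, -⟩; exact h rfl

/-- `kc ends A` is the number of connected components of the spanning subgraph `(V, A)`. -/
noncomputable def kc {V E : Type} (ends : E → Sym2 V) (A : Finset E) : ℕ :=
  Nat.card (edgeGraph ends A).ConnectedComponent

/-- `(V, A)` is a spanning forest of `(V, E)`: it is a forest
(`|A| + k((V,A)) = |V|`, which rules out loops, parallel edges and cycles)
with as many connected components as the whole graph. -/
def IsSpanningForest {V E : Type} [Fintype V] [Fintype E] (ends : E → Sym2 V)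
    (A : Finset E) : Prop :=
  A.card + kc ends A = Fintype.card V ∧ kc ends A = kc ends Finset.univ

/-- `F - e + f`. -/
def swapEdge {E : Type} [DecidableEq E] (A : Finset E) (e f : E) : Finset E :=
  insert f (A.erase e)

/-- `e` is internally active in the spanning forest `(V, A)`. -/
def InternallyActive {V E : Type} [Fintype V] [Fintype E] [DecidableEq E] [LinearOrder E]
    (ends : E → Sym2 V) (A : Finset E) (e : E) : Prop :=
  e ∈ A ∧ ¬ ∃ f, f ∉ A ∧ e < f ∧ IsSpanningForest ends (swapEdge A e f)

/-- `f` is externally active in the spanning forest `(V, A)`. -/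
def ExternallyActive {V E : Type} [Fintype V] [Fintype E] [DecidableEq E] [LinearOrder E]
    (ends : E → Sym2 V) (A : Finset E) (f : E) : Prop :=
  f ∉ A ∧ ¬ ∃ e, e ∈ A ∧ f < e ∧ IsSpanningForest ends (swapEdge A e f)

/-- The set `E_i(F)` of internally active edges of the spanning forest `F = (V, A)`. -/
noncomputable def intAct {V E : Type} [Fintype V] [Fintype E] [DecidableEq E] [LinearOrder E]
    (ends : E → Sym2 V) (A : Finset E) : Finset E :=
  Finset.univ.filter (InternallyActive ends A)

/-- The set `E_e(F)` of externally active edges of the spanning forest `F = (V, A)`. -/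
noncomputable def extAct {V E : Type} [Fintype V] [Fintype E] [DecidableEq E] [LinearOrder E]
    (ends : E → Sym2 V) (A : Finset E) : Finset E :=
  Finset.univ.filter (ExternallyActive ends A)

namespace SimpleGraph

variable {V : Type*} {G H : SimpleGraph V}

lemma reachable_le_of_adj_le (h : H.Adj ≤ G.Reachable) : H.Reachable ≤ G.Reachable := by
  simp only [reachable_eq_reflTransGen] at h ⊢
  exact Relation.reflTransGen_closed h

lemma Reachable.of_sup_edge {a b x y : V} (h : (G ⊔ edge a b).Reachable x y) :
    G.Reachable x y ∨
      ((G.Reachable x a ∨ G.Reachable x b) ∧ (G.Reachable y a ∨ G.Reachable y b)) := by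
  rw [reachable_iff_reflTransGen] at h
  induction h with
  | refl => exact .inl .rfl
  | @tail y z _ hyz ih =>
    rcases (sup_adj _ _ _ _).mp hyz with hyz | hyz
    · rcases ih with hxy | ⟨hx, hy | hy⟩
      · exact .inl (hxy.trans hyz.reachable)
      · exact .inr ⟨hx, .inl (hyz.reachable.symm.trans hy)⟩
      · exact .inr ⟨hx, .inr (hyz.reachable.symm.trans hy)⟩
    · obtain ⟨⟨rfl, rfl⟩ | ⟨rfl, rfl⟩, -⟩ := (edge_adj ..).mp hyz <;>
        grind [Reachable.rfl]

lemma card_connectedComponent_sup_edge_add_one [Finite V] {a b : V} (hab : ¬G.Reachable a b) :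
    Nat.card (G ⊔ edge a b).ConnectedComponent + 1 = Nat.card G.ConnectedComponent := by
  let φ := ConnectedComponent.map (Hom.ofLE (le_sup_left : G ≤ G ⊔ edge a b))
  have hadj : (G ⊔ edge a b).Adj a b :=
    Or.inr ((edge_adj ..).mpr ⟨.inl ⟨rfl, rfl⟩, fun h => hab (h ▸ .rfl)⟩)
  -- The edge `s(a, b)` merges the components of `a` and `b` and no others.
  have hφ : Function.Bijective fun c : {c // c ≠ G.connectedComponentMk a} => φ c := by
    constructor
    · rintro ⟨c, hc⟩ ⟨d, hd⟩ hcd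
      induction c using ConnectedComponent.ind with | h u
      induction d using ConnectedComponent.ind with | h v
      have hu : ¬G.Reachable u a := fun h => hc (ConnectedComponent.sound h)
      have hv : ¬G.Reachable v a := fun h => hd (ConnectedComponent.sound h)
      refine Subtype.ext (ConnectedComponent.sound ?_)
      rcases (ConnectedComponent.exact hcd).of_sup_edge with huv | ⟨hu' | hu', hv' | hv'⟩
      exacts [huv, (hu hu').elim, (hu hu').elim, (hv hv').elim, hu'.trans hv'.symm]
    · intro c
      induction c using ConnectedComponent.ind with | h u
      by_cases hu : G.Reachable u a
      · refine ⟨⟨G.connectedComponentMk b, fun h => hab (ConnectedComponent.exact h).symm⟩, ?_⟩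
        exact ConnectedComponent.sound (hadj.reachable.symm.trans (hu.mono le_sup_left).symm)
      · exact ⟨⟨G.connectedComponentMk u, fun h => hu (ConnectedComponent.exact h)⟩, rfl⟩
  rw [← Nat.card_congr (Equiv.optionSubtypeNe (G.connectedComponentMk a)), Finite.card_option,
    Nat.card_congr (Equiv.ofBijective _ hφ)]

end SimpleGraph

open SimpleGraph

section EdgeGraph

variable {V E : Type} {ends : E → Sym2 V}

lemma edgeGraph_mono {S T : Finset E} (h : S ⊆ T) : edgeGraph ends S ≤ edgeGraph ends T :=
  fun _ _ ⟨hab, e, he, hs⟩ => ⟨hab, e, h he, hs⟩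

lemma edgeGraph_empty : edgeGraph ends ∅ = ⊥ := by
  ext
  simp [edgeGraph]

lemma edgeGraph_insert [DecidableEq E] {S : Finset E} {f : E} {a b : V} (hf : ends f = s(a, b)) :
    edgeGraph ends (insert f S) = edgeGraph ends S ⊔ edge a b := by
  ext u v
  simp only [edgeGraph, sup_adj, edge_adj, mem_insert, or_and_right, exists_or, exists_eq_left,
    hf, Sym2.eq_iff]
  grind

def Spans (ends : E → Sym2 V) (S : Finset E) (f : E) : Prop :=
  ∀ a b, ends f = s(a, b) → (edgeGraph ends S).Reachable a b

lemma spans_of_mem {S : Finset E} {f : E} (hf : f ∈ S) : Spans ends S f := by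
  intro a b hab
  by_cases hne : a = b
  · exact hne ▸ .rfl
  · exact Adj.reachable ⟨hne, f, hf, hab⟩

lemma kc_empty [Fintype V] : kc ends ∅ = Fintype.card V := by
  rw [kc, edgeGraph_empty, ← Nat.card_eq_fintype_card]
  have hmk : Function.Bijective (⊥ : SimpleGraph V).connectedComponentMk :=
    ⟨fun u v h => reachable_bot.mp (ConnectedComponent.exact h), fun c => c.ind fun u => ⟨u, rfl⟩⟩
  exact (Nat.card_congr (Equiv.ofBijective _ hmk)).symm

lemma kc_insert_add_one [Finite V] [DecidableEq E] {S : Finset E} {f : E} (hf : ¬Spans ends S f) :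
    kc ends (insert f S) + 1 = kc ends S := by
  obtain ⟨a, b, hab, hr⟩ : ∃ a b, ends f = s(a, b) ∧ ¬(edgeGraph ends S).Reachable a b := by
    simpa [Spans] using hf
  rw [kc, kc, edgeGraph_insert hab]
  exact card_connectedComponent_sup_edge_add_one hr

lemma kc_eq_of_forall_spans {S T : Finset E} (hST : S ⊆ T) (h : ∀ f ∈ T, Spans ends S f) :
    kc ends T = kc ends S := by
  have : (edgeGraph ends T).Reachable = (edgeGraph ends S).Reachable :=
    le_antisymm (reachable_le_of_adj_le fun _ _ ⟨_, f, hf, hab⟩ => h f hf _ _ hab)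
      (Reachable.mono' (edgeGraph_mono hST))
  unfold kc ConnectedComponent
  rw [this]

end EdgeGraph

lemma le_of_forall_sum_le_sum_swapEdge {E : Type} [DecidableEq E] {P : Finset E → Prop}
    (w : E → ℕ) {B : Finset E} (hB : ∀ C, P C → ∑ x ∈ B, w x ≤ ∑ x ∈ C, w x) {e f : E} (he : e ∈ B)
    (hf : f ∉ B) (hP : P (swapEdge B e f)) : w e ≤ w f := by
  have := hB _ hP
  rw [swapEdge, sum_insert fun h => hf (mem_of_mem_erase h), ← add_sum_erase B w he] at this
  omega

section SpanningForest

variable {V E : Type} [Fintype V] {ends : E → Sym2 V}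

def IsForest (ends : E → Sym2 V) (S : Finset E) : Prop :=
  S.card + kc ends S = Fintype.card V

lemma isForest_empty : IsForest ends ∅ := by
  simp [IsForest, kc_empty]

lemma IsForest.insert [DecidableEq E] {S : Finset E} {f : E} (hS : IsForest ends S)
    (hf : ¬Spans ends S f) : IsForest ends (insert f S) := by
  have hfS : f ∉ S := fun h => hf (spans_of_mem h)
  have := kc_insert_add_one hf
  unfold IsForest at hS ⊢
  rw [card_insert_of_notMem hfS]
  omega

variable [Fintype E]

theorem exists_isSpanningForest : ∃ S, IsSpanningForest ends S := by
  obtain ⟨S, hS, hmax⟩ := (univ.filter (IsForest ends)).exists_max_image card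
    ⟨∅, mem_filter.mpr ⟨mem_univ _, isForest_empty⟩⟩
  simp only [mem_filter, mem_univ, true_and] at hS hmax
  have hspans (f : E) : Spans ends S f := by
    by_contra hf
    have := hmax _ (hS.insert hf)
    rw [card_insert_of_notMem fun h => hf (spans_of_mem h)] at this
    omega
  exact ⟨S, hS, (kc_eq_of_forall_spans (subset_univ S) fun f _ => hspans f).symm⟩

theorem exists_isSpanningForest_forall_swapEdge [DecidableEq E] (w : E → ℕ) :
    ∃ B, IsSpanningForest ends B ∧
      ∀ e ∈ B, ∀ f ∉ B, IsSpanningForest ends (swapEdge B e f) → w e ≤ w f := by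
  obtain ⟨S, hS⟩ := exists_isSpanningForest (ends := ends)
  obtain ⟨B, hB, hmin⟩ := (univ.filter (IsSpanningForest ends)).exists_min_image
    (∑ x ∈ ·, w x) ⟨S, mem_filter.mpr ⟨mem_univ _, hS⟩⟩
  simp only [mem_filter, mem_univ, true_and] at hB hmin
  exact ⟨B, hB, fun e he f hf => le_of_forall_sum_le_sum_swapEdge w hmin he hf⟩

end SpanningForest

section ActivityWeight

variable {E : Type} [Fintype E] [LinearOrder E]

noncomputable def orderRank (x : E) : ℕ :=
  (Fintype.orderIsoFinOfCardEq E rfl).symm x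

lemma orderRank_lt_card (x : E) : orderRank x < Fintype.card E :=
  ((Fintype.orderIsoFinOfCardEq E rfl).symm x).isLt

lemma orderRank_strictMono : StrictMono (orderRank : E → ℕ) :=
  fun _ _ h => (Fintype.orderIsoFinOfCardEq E rfl).symm.strictMono h

noncomputable def activityWeight (A : Finset E) (x : E) : ℕ :=
  if x ∈ A then orderRank x else 2 * Fintype.card E - orderRank x

lemma activityWeight_lt_of_notMem_of_lt {A : Finset E} {e f : E} (he : e ∉ A) (hef : e < f) :
    activityWeight A f < activityWeight A e := by
  have := orderRank_strictMono hef
  have := orderRank_lt_card e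
  have := orderRank_lt_card f
  unfold activityWeight
  split_ifs <;> omega

lemma activityWeight_lt_of_mem_of_lt {A : Finset E} {e f : E} (hf : f ∈ A) (hfe : f < e) :
    activityWeight A f < activityWeight A e := by
  have := orderRank_strictMono hfe
  have := orderRank_lt_card e
  have := orderRank_lt_card f
  unfold activityWeight
  split_ifs <;> omega

end ActivityWeight

/-- Surjectivity: every edge subset `A` arises from some spanning
forest `(V, A_f)` as `(A_f \ A_i) ∪ A_e` with `A_i ⊆ E_i(F)`, `A_e ⊆ E_e(F)`;
moreover `A_i = A_f \ A` and `A_e = A \ A_f`. -/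
theorem activity_map_surjective {V E : Type} [Fintype V] [Fintype E] [DecidableEq E]
    [LinearOrder E] (ends : E → Sym2 V) (A : Finset E) :
    ∃ Af : Finset E, IsSpanningForest ends Af ∧
      Af \ A ⊆ intAct ends Af ∧ A \ Af ⊆ extAct ends Af ∧
      A = (Af \ (Af \ A)) ∪ (A \ Af) := by
  obtain ⟨F, hF, hswap⟩ :=
    exists_isSpanningForest_forall_swapEdge (ends := ends) (activityWeight A)
  refine ⟨F, hF, fun e he => ?_, fun f hf => ?_, ?_⟩
  · obtain ⟨heF, heA⟩ := mem_sdiff.mp he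
    refine mem_filter.mpr ⟨mem_univ e, heF, fun ⟨f, hfF, hef, hF'⟩ => ?_⟩
    exact (hswap e heF f hfF hF').not_gt (activityWeight_lt_of_notMem_of_lt heA hef)
  · obtain ⟨hfA, hfF⟩ := mem_sdiff.mp hf
    refine mem_filter.mpr ⟨mem_univ f, hfF, fun ⟨e, heF, hfe, hF'⟩ => ?_⟩
    exact (hswap e heF f hfF hF').not_gt (activityWeight_lt_of_mem_of_lt hfA hfe)
  · ext x
    simp only [mem_union, mem_sdiff]
    tauto
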